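/- (Cone Lemma II) Let Δ be a proper geometric simplicial complex in ℝ^d and let v be a vertex of Δ. Then for every integer k, the partial differential δ_v = ∂/∂x_v induces an isomorphism δ_v : S_{k+1}(St_v° Δ) → S_{k}(St_v Δ) from the relative stress space of the open star of v to the stress space of the star of v. -/

import Mathlib

open MvPolynomial

open MvPolynomial

/-- An abstract simplicial complex on the vertex set `Fin n`:
a collection of finite subsets closed under taking subsets. -/
def IsComplex {n : ℕ} (Δ : Set (Finset (Fin n))) : Prop :=
  ∀ σ ∈ Δ, ∀ τ ⊆ σ, τ ∈ Δ

/-- The vertex set `Δ^(0)` of a simplicial complex. -/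
def verts {n : ℕ} (Δ : Set (Finset (Fin n))) : Set (Fin n) := {v | {v} ∈ Δ}

/-- The partial derivative `∂/∂xᵢ` as a linear endomorphism of `ℝ[x₁,…,xₙ]`. -/
noncomputable def pd {n : ℕ} (i : Fin n) : Module.End ℝ (MvPolynomial (Fin n) ℝ) :=
  (pderiv i).toLinearMap

/-- The constant coefficient differential operator `(x^a)^∨ = ∏ᵢ (∂/∂xᵢ)^(aᵢ)`. -/
noncomputable def monDiff {n : ℕ} (a : Fin n →₀ ℕ) : Module.End ℝ (MvPolynomial (Fin n) ℝ) :=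
  ((List.finRange n).map fun i => pd i ^ a i).prod

/-- The stress space `S̃(Δ)`: polynomials annihilated by `q^∨` for every `q` in the
nonface ideal `I_Δ` (equivalently, by `(x^a)^∨` for every monomial generator `x^a` of `I_Δ`). -/
noncomputable def tStress {n : ℕ} (Δ : Set (Finset (Fin n))) :
    Submodule ℝ (MvPolynomial (Fin n) ℝ) :=
  ⨅ a ∈ {a : Fin n →₀ ℕ | a.support ∉ Δ}, LinearMap.ker (monDiff a)

/-- A linear differential `Σᵢ cᵢ ∂/∂xᵢ`. -/
noncomputable def linDiff {n : ℕ} (c : Fin n → ℝ) : Module.End ℝ (MvPolynomial (Fin n) ℝ) :=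
  ∑ i, c i • pd i

/-- The canonical differential `δ = Σᵢ ∂/∂xᵢ`. -/
noncomputable def canDiff (n : ℕ) : Module.End ℝ (MvPolynomial (Fin n) ℝ) :=
  linDiff fun _ => (1 : ℝ)

/-- The coordinate differential `θⱼ = Σᵢ (vᵢ)ⱼ ∂/∂xᵢ` of a geometric simplicial complex. -/
noncomputable def coordDiff {n d : ℕ} (V : Fin n → Fin d → ℝ) (j : Fin d) :
    Module.End ℝ (MvPolynomial (Fin n) ℝ) :=
  linDiff fun i => V i j

/-- The stress space `S(Δ)` of a geometric simplicial complex with vertex coordinates `V`. -/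
noncomputable def stress {n d : ℕ} (V : Fin n → Fin d → ℝ) (Δ : Set (Finset (Fin n))) :
    Submodule ℝ (MvPolynomial (Fin n) ℝ) :=
  tStress Δ ⊓ ⨅ j : Fin d, LinearMap.ker (coordDiff V j)

/-- The degree-`k` graded piece `S_k(Δ)` of the stress space. -/
noncomputable def stressK {n d : ℕ} (V : Fin n → Fin d → ℝ) (Δ : Set (Finset (Fin n)))
    (k : ℕ) : Submodule ℝ (MvPolynomial (Fin n) ℝ) :=
  stress V Δ ⊓ homogeneousSubmodule (Fin n) ℝ k

/-- A geometric simplicial complex in `ℝ^d` is proper if the coordinates of each face of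
dimension `< d` are linearly independent. -/
def IsProper {n d : ℕ} (V : Fin n → Fin d → ℝ) (Δ : Set (Finset (Fin n))) : Prop :=
  ∀ σ ∈ Δ, σ.card ≤ d → LinearIndependent ℝ (fun i : {x // x ∈ σ} => V i.1)

/-- The star of a face. -/
def cStar {n : ℕ} (Δ : Set (Finset (Fin n))) (σ : Finset (Fin n)) : Set (Finset (Fin n)) :=
  {τ ∈ Δ | σ ∪ τ ∈ Δ}

/-- The star of a vertex. -/
def vStar {n : ℕ} (Δ : Set (Finset (Fin n))) (v : Fin n) : Set (Finset (Fin n)) :=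
  cStar Δ {v}

/-- The boundary `∂St_v Δ` of the star of a vertex: faces of the star not containing `v`. -/
def vStarBd {n : ℕ} (Δ : Set (Finset (Fin n))) (v : Fin n) : Set (Finset (Fin n)) :=
  {τ ∈ vStar Δ v | v ∉ τ}

/-- The link of a face. -/
def lk {n : ℕ} (Δ : Set (Finset (Fin n))) (σ : Finset (Fin n)) : Set (Finset (Fin n)) :=
  {τ | Disjoint σ τ ∧ σ ∪ τ ∈ Δ}

/-- The vertex set `γ^(0)` of the support of a stress `γ`. -/
noncomputable def stressVerts {n : ℕ} (γ : MvPolynomial (Fin n) ℝ) : Finset (Fin n) :=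
  γ.support.biUnion fun a => a.support

/-- `g_k = dim S_k − dim S_{k−1}` (with `S_{−1} = 0`). -/
noncomputable def gnum {n d : ℕ} (V : Fin n → Fin d → ℝ) (Δ : Set (Finset (Fin n)))
    (k : ℕ) : ℤ :=
  (Module.finrank ℝ ↥(stressK V Δ k) : ℤ) -
    if k = 0 then 0 else (Module.finrank ℝ ↥(stressK V Δ (k - 1)) : ℤ)

/-- The homogenizing embedding `ℝ^d → ℝ^d × {1} ⊆ ℝ^{d+1}` applied to vertex coordinates. -/
noncomputable def homV {n d : ℕ} (p : Fin n → Fin d → ℝ) : Fin n → Fin (d + 1) → ℝ :=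
  fun i => Fin.snoc (p i) 1

/-- `Δ` is the boundary complex of the simplicial `d`-polytope `conv{p 1, …, p n}`:
the polytope is full-dimensional, every `p i` is a vertex, the faces of `Δ` are exactly the
vertex sets cut out by supporting hyperplanes, and every proper face is a simplex. -/
def IsSimplicialPolytopeBoundary {n d : ℕ} (p : Fin n → Fin d → ℝ)
    (Δ : Set (Finset (Fin n))) : Prop :=
  affineSpan ℝ (Set.range p) = ⊤ ∧
  (∀ i, p i ∉ convexHull ℝ (p '' {j | j ≠ i})) ∧
  (∀ σ ∈ Δ, AffineIndependent ℝ (fun i : {x // x ∈ σ} => p i.1)) ∧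
  (∀ σ : Finset (Fin n), σ ∈ Δ ↔
    ∃ (f : (Fin d → ℝ) →ₗ[ℝ] ℝ) (c : ℝ),
      (∃ i, f (p i) < c) ∧ (∀ i, f (p i) ≤ c) ∧ (∀ i, f (p i) = c ↔ i ∈ σ))

/-- The simplicial boundary operator (with real coefficients), on the free module spanned by
all finite subsets of `Fin n`; the empty set plays the role of the `(−1)`-face, so that the
associated homology is reduced. -/
noncomputable def bdry {n : ℕ} : (Finset (Fin n) →₀ ℝ) →ₗ[ℝ] (Finset (Fin n) →₀ ℝ) :=
  Finsupp.lsum ℝ fun σ => LinearMap.toSpanSingleton ℝ _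
    (∑ i ∈ σ, ((-1 : ℝ) ^ (σ.filter (· < i)).card) • Finsupp.single (σ.erase i) (1 : ℝ))

/-- The space of simplicial `k`-chains of `Δ` (spanned by faces of `Δ` of dimension `k`). -/
noncomputable def chains {n : ℕ} (Δ : Set (Finset (Fin n))) (k : ℤ) :
    Submodule ℝ (Finset (Fin n) →₀ ℝ) :=
  Finsupp.supported ℝ ℝ {σ | σ ∈ Δ ∧ (σ.card : ℤ) = k + 1}

/-- Reduced simplicial `k`-cycles of `Δ`. -/
noncomputable def cycles {n : ℕ} (Δ : Set (Finset (Fin n))) (k : ℤ) :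
    Submodule ℝ (Finset (Fin n) →₀ ℝ) :=
  chains Δ k ⊓ LinearMap.ker bdry

/-- Simplicial `k`-boundaries of `Δ`. -/
noncomputable def bdries {n : ℕ} (Δ : Set (Finset (Fin n))) (k : ℤ) :
    Submodule ℝ (Finset (Fin n) →₀ ℝ) :=
  Submodule.map bdry (chains Δ (k + 1))

/-- The reduced Betti number `β̃_k(Δ)` (with real coefficients). -/
noncomputable def rBetti {n : ℕ} (Δ : Set (Finset (Fin n))) (k : ℤ) : ℕ :=
  Module.finrank ℝ ↥(cycles Δ k) - Module.finrank ℝ ↥(bdries Δ k)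

/-- The induced subcomplex `Δ_W` on a vertex set `W`. -/
def induced {n : ℕ} (Δ : Set (Finset (Fin n))) (W : Finset (Fin n)) : Set (Finset (Fin n)) :=
  {σ ∈ Δ | σ ⊆ W}

/-- The vertex set of the support of a simplicial chain. -/
def chainVerts {n : ℕ} (c : Finset (Fin n) →₀ ℝ) : Finset (Fin n) :=
  c.support.biUnion id

/-- `Δ` is resolution `k`-chordal: every `k`-cycle `z` admits a resolution, i.e. a
`(k+1)`-chain `c` with `∂c = z` and `c^(0) = z^(0)`. -/
def ResolutionChordal {n : ℕ} (Δ : Set (Finset (Fin n))) (k : ℤ) : Prop :=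
  ∀ z ∈ cycles Δ k, ∃ c ∈ chains Δ (k + 1), bdry c = z ∧ chainVerts c = chainVerts z

/-- `(Δ, ω)` is toric `k`-chordal: `ω : S_{k+1}(Δ) → S_k(Δ)` is surjective and
`ω : S_k(Δ) → S_{k−1}(Δ)` is injective. -/
def ToricChordal {n d : ℕ} (V : Fin n → Fin d → ℝ) (Δ : Set (Finset (Fin n)))
    (ω : Module.End ℝ (MvPolynomial (Fin n) ℝ)) (k : ℕ) : Prop :=
  (∀ γ ∈ stressK V Δ k, ∃ γ' ∈ stressK V Δ (k + 1), ω γ' = γ) ∧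
  (∀ γ ∈ stressK V Δ k, ω γ = 0 → γ = 0)

/-- `(Δ, ω)` is weakly toric `k`-chordal: `ω : S_k(St_v Δ) → S_{k−1}(St_v Δ)` is injective
for every vertex `v` of `Δ`. -/
def WeaklyToricChordal {n d : ℕ} (V : Fin n → Fin d → ℝ) (Δ : Set (Finset (Fin n)))
    (ω : Module.End ℝ (MvPolynomial (Fin n) ℝ)) (k : ℕ) : Prop :=
  ∀ v ∈ verts Δ, ∀ γ ∈ stressK V (vStar Δ v) k, ω γ = 0 → γ = 0

/-- A missing face of `Δ`: a nonface all of whose proper subsets are faces. -/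
def IsMissingFace {n : ℕ} (Δ : Set (Finset (Fin n))) (σ : Finset (Fin n)) : Prop :=
  σ ∉ Δ ∧ ∀ τ ⊂ σ, τ ∈ Δ

/-- Representatives of relative `k`-stresses of the relative complex `(Δ', Γ)`:
homogeneous degree-`k` elements of `S̃(Δ')` whose image under each coordinate differential
lies in `S̃(Γ)`.  The relative stress space `S_k(Δ', Γ)` is the quotient of this space by
(the degree-`k` part of) `S̃(Γ)`. -/
noncomputable def relStressK {n d : ℕ} (V : Fin n → Fin d → ℝ)
    (Δ' Γ : Set (Finset (Fin n))) (k : ℕ) : Submodule ℝ (MvPolynomial (Fin n) ℝ) :=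
  tStress Δ' ⊓ homogeneousSubmodule (Fin n) ℝ k ⊓
    ⨅ j : Fin d, (tStress Γ).comap (coordDiff V j)

/-- A shelling of a pure `(d−1)`-dimensional simplicial complex: a linear order on the facets
such that the intersection of each facet with the union of all subsequent facets is a pure
`(d−2)`-dimensional complex or empty. -/
def IsShelling {n : ℕ} (Δ : Set (Finset (Fin n))) (d : ℕ) (L : List (Finset (Fin n))) : Prop :=
  L.Nodup ∧ (∀ σ, σ ∈ L ↔ σ ∈ Δ ∧ σ.card = d) ∧
  (∀ σ ∈ Δ, ∃ F ∈ L, σ ⊆ F) ∧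
  ∀ (i : ℕ) (hi : i < L.length) (τ : Finset (Fin n)), τ ⊆ L.get ⟨i, hi⟩ →
    (∃ (j : ℕ) (hj : j < L.length), i < j ∧ τ ⊆ L.get ⟨j, hj⟩) →
    ∃ ρ, τ ⊆ ρ ∧ ρ ⊆ L.get ⟨i, hi⟩ ∧ ρ.card = d - 1 ∧
      ∃ (j : ℕ) (hj : j < L.length), i < j ∧ ρ ⊆ L.get ⟨j, hj⟩

/-- The degree-`k` graded piece of the stress space `S̃(Δ)`. -/
noncomputable def tStressK {n : ℕ} (Δ : Set (Finset (Fin n))) (k : ℕ) :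
    Submodule ℝ (MvPolynomial (Fin n) ℝ) :=
  tStress Δ ⊓ homogeneousSubmodule (Fin n) ℝ k

/-- A sequence `θ` of linear differentials is regular up to degree `k` on `S̃(Δ)`: each
`θ_j` maps the degree-`(i+1)` part of the common kernel of `θ_1, …, θ_{j−1}` in `S̃(Δ)` onto
the degree-`i` part, for every `i ≤ k`. -/
def RegularUpTo {n : ℕ} (Δ : Set (Finset (Fin n)))
    (θ : List (Module.End ℝ (MvPolynomial (Fin n) ℝ))) (k : ℕ) : Prop :=
  ∀ j < θ.length, ∀ i ≤ k,
    ∀ γ ∈ tStressK Δ i ⊓ ⨅ l ∈ Finset.range j, LinearMap.ker (θ.getD l 0),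
      ∃ γ' ∈ tStressK Δ (i + 1) ⊓ ⨅ l ∈ Finset.range j, LinearMap.ker (θ.getD l 0),
        θ.getD j 0 γ' = γ

/-- `dim Δ + 1`: the maximal cardinality of a face. -/
noncomputable def dim1 {n : ℕ} (Δ : Set (Finset (Fin n))) : ℕ :=
  sSup {m | ∃ σ ∈ Δ, σ.card = m}

/-- `Δ` is Cohen–Macaulay over `ℝ`: the reduced homology of every face link vanishes below
the expected dimension. -/
def IsCM {n : ℕ} (Δ : Set (Finset (Fin n))) : Prop :=
  ∀ σ ∈ Δ, ∀ i : ℤ, i < (dim1 Δ : ℤ) - 1 - σ.card →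
    cycles (lk Δ σ) i ≤ bdries (lk Δ σ) i

/-- `(q, T)` is a triangulation of the simplicial polytope `P = conv{p i}` whose faces contained
in the boundary `∂P` form exactly the boundary complex `Δ` of `P`. -/
def IsTriangulation {n d m : ℕ} (p : Fin n → Fin d → ℝ) (Δ : Set (Finset (Fin n)))
    (q : Fin m → Fin d → ℝ) (T : Set (Finset (Fin m))) : Prop :=
  IsComplex T ∧
  (∀ σ ∈ T, AffineIndependent ℝ (fun i : {x // x ∈ σ} => q i.1)) ∧
  (∀ σ ∈ T, ∀ τ ∈ T,
    convexHull ℝ (q '' ↑σ) ∩ convexHull ℝ (q '' ↑τ) = convexHull ℝ (q '' ↑(σ ∩ τ))) ∧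
  (⋃ σ ∈ T, convexHull ℝ (q '' ↑σ)) = convexHull ℝ (Set.range p) ∧
  {s : Set (Fin d → ℝ) | ∃ σ ∈ T,
      convexHull ℝ (q '' ↑σ) ⊆ frontier (convexHull ℝ (Set.range p)) ∧ s = q '' ↑σ}
    = {s : Set (Fin d → ℝ) | ∃ σ ∈ Δ, s = p '' ↑σ}

/-- The restriction `Δ_S` of a balanced complex to the set `S` of colors. -/
def colorRestrict {n d : ℕ} (Δ : Set (Finset (Fin n))) (col : Fin n → Fin d)
    (S : Finset (Fin d)) : Set (Finset (Fin n)) :=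
  {σ ∈ Δ | ∀ v ∈ σ, col v ∈ S}

/-! A polynomial lies in `S̃(Δ)` of a simplicial complex `Δ` exactly when each of its monomials
is supported on a face of `Δ`. Hence `S̃(∂St_v Δ)` is the part of `S̃(St_v Δ)` not involving
`x_v`, that is, the kernel of `δ_v` there; this is injectivity on the quotient. As `δ_v` commutes
with the coordinate differentials `θ_j`, it maps relative stresses of the open star to stresses of
the star. Conversely, integrating a stress of the star in `x_v` monomial by monomial only adds `v`
to the supports, which stays inside the star because the star is a cone with apex `v`; the
result is a relative stress of the open star whose `δ_v`-derivative is the given stress. -/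

theorem MvPolynomial.pderiv_eq_zero_iff_notMem_vars {σ R : Type*} [CommSemiring R]
    [NoZeroDivisors R] [CharZero R] {i : σ} {p : MvPolynomial σ R} :
    pderiv i p = 0 ↔ i ∉ p.vars := by
  refine ⟨fun h hi => ?_, pderiv_eq_zero_of_notMem_vars⟩
  obtain ⟨m, hm, hmi⟩ := (mem_vars_iff_mem_support i).mp hi
  have hcoeff := coeff_pderiv (i := i) p (m - Finsupp.single i 1)
  rw [h, coeff_zero, tsub_add_cancel_of_le (Finsupp.single_le_iff.mpr
    (Nat.one_le_iff_ne_zero.mpr (Finsupp.mem_support_iff.mp hmi)))] at hcoeff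
  exact mem_support_iff.mp hm
    ((mul_eq_zero.mp hcoeff.symm).resolve_right (Nat.cast_add_one_ne_zero _))

section StressSupport

variable {n : ℕ}

theorem pd_apply (i : Fin n) (p : MvPolynomial (Fin n) ℝ) : pd i p = pderiv i p := rfl

theorem pd_pow_monomial (i : Fin n) (k : ℕ) (m : Fin n →₀ ℕ) (c : ℝ) :
    (pd i ^ k) (monomial m c) =
      monomial (m - Finsupp.single i k) (c * (m i).descFactorial k) := by
  induction k with
  | zero => simp
  | succ k ih =>
    rw [pow_succ', Module.End.mul_apply, ih, pd_apply, pderiv_monomial, tsub_tsub,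
      ← Finsupp.single_add, Finsupp.tsub_apply, Finsupp.single_eq_same, Nat.descFactorial_succ,
      Nat.cast_mul, mul_assoc, mul_comm ((m i - k : ℕ) : ℝ)]

theorem list_prod_pd_pow_monomial (b m : Fin n →₀ ℕ) (c : ℝ) {l : List (Fin n)}
    (hl : l.Nodup) :
    (l.map fun i => pd i ^ b i).prod (monomial m c) =
      monomial (m - ∑ i ∈ l.toFinset, Finsupp.single i (b i))
        (c * ∏ i ∈ l.toFinset, ((m i).descFactorial (b i) : ℝ)) := by
  induction l with
  | nil => simp
  | cons i t ih =>
    obtain ⟨hit, ht⟩ := List.nodup_cons.mp hl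
    have hit' : i ∉ t.toFinset := by simpa using hit
    have hmi : (m - ∑ j ∈ t.toFinset, Finsupp.single j (b j)) i = m i := by
      simp [Finsupp.single_apply, hit]
    rw [List.map_cons, List.prod_cons, Module.End.mul_apply, ih ht, pd_pow_monomial, hmi,
      List.toFinset_cons, Finset.sum_insert hit', Finset.prod_insert hit', tsub_tsub, add_comm]
    ring_nf

theorem monDiff_monomial (b m : Fin n →₀ ℕ) (c : ℝ) :
    monDiff b (monomial m c) =
      monomial (m - b) (c * ∏ i, ((m i).descFactorial (b i) : ℝ)) := by
  rw [monDiff, list_prod_pd_pow_monomial b m c (List.nodup_finRange n), List.toFinset_finRange,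
    Finsupp.univ_sum_single]

theorem coeff_monDiff (b t : Fin n →₀ ℕ) (p : MvPolynomial (Fin n) ℝ) :
    coeff t (monDiff b p) =
      coeff (t + b) p * ∏ i, (((t + b) i).descFactorial (b i) : ℝ) := by
  conv_lhs => rw [p.as_sum]
  rw [map_sum, coeff_sum]
  simp only [monDiff_monomial, coeff_monomial]
  rw [Finset.sum_eq_single (t + b)]
  · rw [if_pos (add_tsub_cancel_right t b)]
  · intro m _ hne
    split_ifs with h
    · obtain ⟨i, hi⟩ : ∃ i, m i < b i := by
        by_contra! hbm
        exact hne (by rw [← h, tsub_add_cancel_of_le (Finsupp.le_def.mpr hbm)])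
      rw [Finset.prod_eq_zero (Finset.mem_univ i)
        (by rw [Nat.descFactorial_eq_zero_iff_lt.mpr hi, Nat.cast_zero]), mul_zero]
    · rfl
  · intro h
    rw [MvPolynomial.notMem_support_iff.mp h, zero_mul, if_pos (add_tsub_cancel_right t b)]

variable {Δ : Set (Finset (Fin n))} {p : MvPolynomial (Fin n) ℝ}

theorem mem_tStress_iff :
    p ∈ tStress Δ ↔ ∀ b : Fin n →₀ ℕ, b.support ∉ Δ → monDiff b p = 0 := by
  simp [tStress, Submodule.mem_iInf, LinearMap.mem_ker]

theorem support_mem_of_mem_tStress (hp : p ∈ tStress Δ) {m : Fin n →₀ ℕ}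
    (hm : m ∈ p.support) : m.support ∈ Δ := by
  by_contra h
  have hcoeff := coeff_monDiff m 0 p
  rw [mem_tStress_iff.mp hp m h, coeff_zero, zero_add] at hcoeff
  exact mem_support_iff.mp hm (by
    simpa [Nat.descFactorial_self, Finset.prod_eq_zero_iff, Nat.factorial_ne_zero] using
      hcoeff.symm)

theorem mem_tStress_iff_support (hΔ : IsComplex Δ) :
    p ∈ tStress Δ ↔ ∀ m ∈ p.support, m.support ∈ Δ := by
  refine ⟨fun hp _ => support_mem_of_mem_tStress hp, fun h => mem_tStress_iff.mpr ?_⟩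
  intro b hb
  refine MvPolynomial.ext _ _ fun t => ?_
  rw [coeff_monDiff, coeff_zero, notMem_support_iff.mp fun ht => hb ?_, zero_mul]
  exact hΔ _ (h _ ht) _ (Finsupp.support_mono le_add_self)

theorem pd_mem_tStress (hΔ : IsComplex Δ) (hp : p ∈ tStress Δ) (i : Fin n) :
    pd i p ∈ tStress Δ := by
  rw [mem_tStress_iff_support hΔ] at hp ⊢
  intro m hm
  rw [mem_support_iff, pd_apply, coeff_pderiv] at hm
  exact hΔ _ (hp _ (mem_support_iff.mpr (left_ne_zero_of_mul hm))) _
    (Finsupp.support_mono le_self_add)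

theorem linDiff_mem_tStress (hΔ : IsComplex Δ) (hp : p ∈ tStress Δ) (c : Fin n → ℝ) :
    linDiff c p ∈ tStress Δ := by
  rw [linDiff, LinearMap.sum_apply]
  exact Submodule.sum_mem _ fun i _ => Submodule.smul_mem _ _ (pd_mem_tStress hΔ hp i)

theorem commute_pd (i j : Fin n) : Commute (pd i) (pd j) := by
  refine LinearMap.ext fun p => MvPolynomial.ext _ _ fun t => ?_
  rcases eq_or_ne i j with rfl | hij
  · rfl
  simp only [Module.End.mul_apply, pd_apply, coeff_pderiv, Finsupp.add_apply,
    Finsupp.single_eq_of_ne hij, Finsupp.single_eq_of_ne hij.symm, add_zero, add_right_comm t]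
  ring

theorem commute_pd_linDiff (i : Fin n) (c : Fin n → ℝ) : Commute (pd i) (linDiff c) :=
  Commute.sum_right _ _ _ fun j _ => (commute_pd i j).smul_right _

end StressSupport

section Star

variable {n : ℕ} {Δ : Set (Finset (Fin n))}

theorem IsComplex.vStar (hΔ : IsComplex Δ) (v : Fin n) : IsComplex (vStar Δ v) :=
  fun _ hτ _ hρ => ⟨hΔ _ hτ.1 _ hρ, hΔ _ hτ.2 _ (Finset.union_subset_union_right hρ)⟩

theorem IsComplex.vStarBd (hΔ : IsComplex Δ) (v : Fin n) : IsComplex (vStarBd Δ v) :=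
  fun _ hτ _ hρ => ⟨hΔ.vStar v _ hτ.1 _ hρ, fun hv => hτ.2 (hρ hv)⟩

variable {v : Fin n}

theorem insert_mem_vStar {τ : Finset (Fin n)} (hτ : τ ∈ vStar Δ v) :
    insert v τ ∈ vStar Δ v := by
  have hvτ : insert v τ ∈ Δ := by rw [Finset.insert_eq]; exact hτ.2
  exact ⟨hvτ, by rwa [Finset.singleton_union, Finset.insert_idem]⟩

theorem mem_tStress_vStarBd_iff (hΔ : IsComplex Δ) {p : MvPolynomial (Fin n) ℝ} :
    p ∈ tStress (vStarBd Δ v) ↔ p ∈ tStress (vStar Δ v) ∧ pd v p = 0 := by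
  rw [mem_tStress_iff_support (hΔ.vStarBd v), mem_tStress_iff_support (hΔ.vStar v), pd_apply,
    pderiv_eq_zero_iff_notMem_vars, mem_vars_iff_mem_support]
  simp only [not_exists, not_and]
  exact forall₂_and

end Star

section Antideriv

variable {n : ℕ}

noncomputable def antideriv (v : Fin n) (p : MvPolynomial (Fin n) ℝ) : MvPolynomial (Fin n) ℝ :=
  ∑ m ∈ p.support, monomial (m + Finsupp.single v 1) (coeff m p / (m v + 1))

theorem pd_antideriv (v : Fin n) (p : MvPolynomial (Fin n) ℝ) : pd v (antideriv v p) = p := by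
  conv_rhs => rw [p.as_sum]
  rw [antideriv, map_sum]
  refine Finset.sum_congr rfl fun m _ => ?_
  rw [pd_apply, pderiv_monomial, add_tsub_cancel_right, Finsupp.add_apply, Finsupp.single_eq_same,
    Nat.cast_add, Nat.cast_one, div_mul_cancel₀ _ (Nat.cast_add_one_ne_zero _)]

variable {v : Fin n} {p : MvPolynomial (Fin n) ℝ}

theorem exists_eq_add_single_of_mem_support_antideriv {m' : Fin n →₀ ℕ}
    (hm' : m' ∈ (antideriv v p).support) :
    ∃ m ∈ p.support, m' = m + Finsupp.single v 1 := by
  obtain ⟨m, hm, hm'⟩ := Finset.mem_biUnion.mp (support_sum hm')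
  exact ⟨m, hm, Finset.mem_singleton.mp (support_monomial_subset hm')⟩

theorem MvPolynomial.IsHomogeneous.antideriv {k : ℕ} (hp : p.IsHomogeneous k) :
    (antideriv v p).IsHomogeneous (k + 1) :=
  IsHomogeneous.sum _ _ _ fun m hm => isHomogeneous_monomial _ <| by
    rw [map_add, Finsupp.degree_single, ← hp (mem_support_iff.mp hm),
      Finsupp.degree_eq_weight_one]
    rfl

theorem antideriv_mem_tStress_vStar {Δ : Set (Finset (Fin n))} (hΔ : IsComplex Δ)
    (hp : p ∈ tStress (vStar Δ v)) : antideriv v p ∈ tStress (vStar Δ v) := by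
  rw [mem_tStress_iff_support (hΔ.vStar v)] at hp ⊢
  intro m' hm'
  obtain ⟨m, hm, rfl⟩ := exists_eq_add_single_of_mem_support_antideriv hm'
  rw [Finsupp.support_add_eq_union, Finsupp.support_single _ one_ne_zero,
    Finset.union_comm, Finset.singleton_union]
  exact insert_mem_vStar (hp m hm)

end Antideriv

section ConeLemma

variable {n d : ℕ} {V : Fin n → Fin d → ℝ}

theorem mem_stressK_iff {Δ : Set (Finset (Fin n))} {k : ℕ} {p : MvPolynomial (Fin n) ℝ} :
    p ∈ stressK V Δ k ↔
      p ∈ tStress Δ ∧ (∀ j, coordDiff V j p = 0) ∧ p.IsHomogeneous k := by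
  simp [stressK, stress, Submodule.mem_iInf, mem_homogeneousSubmodule, and_assoc]

theorem mem_relStressK_iff {Δ Γ : Set (Finset (Fin n))} {k : ℕ} {p : MvPolynomial (Fin n) ℝ} :
    p ∈ relStressK V Δ Γ k ↔
      p ∈ tStress Δ ∧ p.IsHomogeneous k ∧ ∀ j, coordDiff V j p ∈ tStress Γ := by
  simp [relStressK, Submodule.mem_iInf, mem_homogeneousSubmodule, and_assoc]

variable {Δ : Set (Finset (Fin n))} {v : Fin n} {k : ℕ}

theorem pd_mem_stressK_vStar (hΔ : IsComplex Δ) {γ : MvPolynomial (Fin n) ℝ}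
    (hγ : γ ∈ relStressK V (vStar Δ v) (vStarBd Δ v) (k + 1)) :
    pd v γ ∈ stressK V (vStar Δ v) k := by
  obtain ⟨hγΔ, hγk, hγV⟩ := mem_relStressK_iff.mp hγ
  refine mem_stressK_iff.mpr ⟨pd_mem_tStress (hΔ.vStar v) hγΔ v, fun j => ?_, hγk.pderiv⟩
  rw [coordDiff, ← Module.End.mul_apply, ← (commute_pd_linDiff v _).eq]
  exact ((mem_tStress_vStarBd_iff hΔ).mp (hγV j)).2

theorem antideriv_mem_relStressK_vStar (hΔ : IsComplex Δ) {s : MvPolynomial (Fin n) ℝ}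
    (hs : s ∈ stressK V (vStar Δ v) k) :
    antideriv v s ∈ relStressK V (vStar Δ v) (vStarBd Δ v) (k + 1) := by
  obtain ⟨hsΔ, hsV, hsk⟩ := mem_stressK_iff.mp hs
  have hγΔ := antideriv_mem_tStress_vStar hΔ hsΔ
  refine mem_relStressK_iff.mpr ⟨hγΔ, hsk.antideriv, fun j => ?_⟩
  refine (mem_tStress_vStarBd_iff hΔ).mpr ⟨linDiff_mem_tStress (hΔ.vStar v) hγΔ _, ?_⟩
  rw [coordDiff, ← Module.End.mul_apply, (commute_pd_linDiff v _).eq, Module.End.mul_apply,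
    pd_antideriv]
  exact hsV j

end ConeLemma

theorem stmt3_general {n d : ℕ} (V : Fin n → Fin d → ℝ) (Δ : Set (Finset (Fin n)))
    (hΔ : IsComplex Δ) (v : Fin n) (k : ℕ) :
    (∀ γ ∈ relStressK V (vStar Δ v) (vStarBd Δ v) (k + 1),
        pd v γ ∈ stressK V (vStar Δ v) k) ∧
    (∀ γ ∈ relStressK V (vStar Δ v) (vStarBd Δ v) (k + 1),
        pd v γ = 0 → γ ∈ tStress (vStarBd Δ v)) ∧
    (∀ s ∈ stressK V (vStar Δ v) k,
        ∃ γ ∈ relStressK V (vStar Δ v) (vStarBd Δ v) (k + 1), pd v γ = s) :=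
  ⟨fun _ hγ => pd_mem_stressK_vStar hΔ hγ,
    fun _ hγ h0 => (mem_tStress_vStarBd_iff hΔ).mpr ⟨(mem_relStressK_iff.mp hγ).1, h0⟩,
    fun s hs => ⟨antideriv v s, antideriv_mem_relStressK_vStar hΔ hs, pd_antideriv v s⟩⟩

theorem stmt3 {n d : ℕ} (V : Fin n → Fin d → ℝ) (Δ : Set (Finset (Fin n)))
    (hΔ : IsComplex Δ) (hp : IsProper V Δ) (v : Fin n) (hv : v ∈ verts Δ) (k : ℕ) :
    (∀ γ ∈ relStressK V (vStar Δ v) (vStarBd Δ v) (k + 1),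
        pd v γ ∈ stressK V (vStar Δ v) k) ∧
    (∀ γ ∈ relStressK V (vStar Δ v) (vStarBd Δ v) (k + 1),
        pd v γ = 0 → γ ∈ tStress (vStarBd Δ v)) ∧
    (∀ s ∈ stressK V (vStar Δ v) k,
        ∃ γ ∈ relStressK V (vStar Δ v) (vStarBd Δ v) (k + 1), pd v γ = s) :=
  stmt3_general V Δ hΔ v k
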